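/- arXiv:2501.05361 — 7 statements merged into one kernel-verified Lean document; each statement's English description precedes it below -/
import Mathlib

section
/- Let f and f₀ be functions on a set X with f* = sup_{x∈X} f₀(x) attained, and suppose f is a ρ-gap-adjusted misspecified approximation of f₀, i.e., |f(x) - f₀(x)| ≤ ρ(f* - f₀(x)) for all x ∈ X with 0 ≤ ρ < 1. Then the set of maximizers of f equals the set of maximizers of f₀. -/
/-!
Write `δ x = f* - f₀ x ≥ 0`. The gap condition gives `f x ≤ f₀ x + ρ δ x = f* - (1 - ρ) δ x`,
so `f ≤ f*`, with equality exactly where `δ x = 0`, i.e. where `f₀` is maximal. Hence `f` and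
`f₀` share the maximal value `f*` and the same level set at it.
-/

open Set

section GapAdjusted

variable {a b c ρ : ℝ}

theorem le_of_abs_sub_le_mul_sub (hρ : ρ ≤ 1) (hb : b ≤ c) (h : |a - b| ≤ ρ * (c - b)) :
    a ≤ c := by
  have hab := (abs_le.mp h).2
  nlinarith

theorem eq_iff_eq_of_abs_sub_le_mul_sub (hρ : ρ < 1) (hb : b ≤ c)
    (h : |a - b| ≤ ρ * (c - b)) : a = c ↔ b = c := by
  have hab := abs_le.mp h
  constructor
  · rintro rfl
    nlinarith
  · rintro rfl
    simpa [sub_eq_zero] using h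

end GapAdjusted

theorem setOf_forall_apply_le_eq_setOf_apply_eq {X α : Type*} [LinearOrder α] {g : X → α}
    {c : α} (hc : IsGreatest (range g) c) : {x | ∀ y, g y ≤ g x} = {x | g x = c} := by
  obtain ⟨⟨x₀, hx₀⟩, hub⟩ := hc
  rw [mem_upperBounds, forall_mem_range] at hub
  ext x
  exact ⟨fun hx => le_antisymm (hub x) (hx₀ ▸ hx x₀), fun hx y => hx ▸ hub y⟩

theorem gam_preserves_maximizers_general {X : Type*} (f f₀ : X → ℝ)
    (fstar : ℝ) (hmax : ∃ x, f₀ x = fstar ∧ ∀ y, f₀ y ≤ fstar)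
    (ρ : ℝ) (hρ1 : ρ < 1)
    (hgam : ∀ x, |f x - f₀ x| ≤ ρ * (fstar - f₀ x)) :
    {x | ∀ y, f y ≤ f x} = {x | ∀ y, f₀ y ≤ f₀ x} := by
  obtain ⟨x₀, hx₀, hub⟩ := hmax
  have hf_eq_iff (x : X) : f x = fstar ↔ f₀ x = fstar :=
    eq_iff_eq_of_abs_sub_le_mul_sub hρ1 (hub x) (hgam x)
  have hf₀_greatest : IsGreatest (range f₀) fstar := ⟨⟨x₀, hx₀⟩, forall_mem_range.2 hub⟩
  have hf_greatest : IsGreatest (range f) fstar :=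
    ⟨⟨x₀, (hf_eq_iff x₀).2 hx₀⟩,
      forall_mem_range.2 fun y => le_of_abs_sub_le_mul_sub hρ1.le (hub y) (hgam y)⟩
  rw [setOf_forall_apply_le_eq_setOf_apply_eq hf_greatest,
    setOf_forall_apply_le_eq_setOf_apply_eq hf₀_greatest]
  ext x
  exact hf_eq_iff x

theorem gam_preserves_maximizers {X : Type*} [TopologicalSpace X] [CompactSpace X]
    [Nonempty X] (f f₀ : X → ℝ) (hf : Continuous f) (hf₀ : Continuous f₀)
    (fstar : ℝ) (hmax : ∃ x, f₀ x = fstar ∧ ∀ y, f₀ y ≤ fstar)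
    (ρ : ℝ) (hρ0 : 0 ≤ ρ) (hρ1 : ρ < 1)
    (hgam : ∀ x, |f x - f₀ x| ≤ ρ * (fstar - f₀ x)) :
    {x | ∀ y, f y ≤ f x} = {x | ∀ y, f₀ y ≤ f₀ x} :=
  gam_preserves_maximizers_general f f₀ fstar hmax ρ hρ1 hgam
end

section
/- Let x₀,…,x_{t-1} ∈ ℝ^d and Σ_t = λI + Σ_{i=0}^{t-1} x_i x_iᵀ with λ > 0. Then Σ_{i=0}^{t-1} x_iᵀ Σ_t^{-1} x_i ≤ d. -/
open Matrix

/-!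
Writing the quadratic forms as traces, `∑ xᵢᵀ Σ⁻¹ xᵢ = tr (Σ⁻¹ ∑ xᵢ xᵢᵀ) = tr (Σ⁻¹ (Σ - λ I)) = d - λ tr Σ⁻¹`,
and `tr Σ⁻¹ ≥ 0` because `Σ⁻¹` is positive definite.
-/

namespace Matrix

variable {ι n R : Type*} [Fintype n]

theorem sum_dotProduct_mulVec_eq_trace_mul_sum [CommSemiring R] (A : Matrix n n R)
    (s : Finset ι) (x : ι → n → R) :
    ∑ i ∈ s, x i ⬝ᵥ (A *ᵥ x i) = (A * ∑ i ∈ s, vecMulVec (x i) (x i)).trace := by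
  simp only [Finset.mul_sum, trace_sum, mul_vecMulVec, trace_vecMulVec, dotProduct_comm]

theorem sum_dotProduct_inv_mulVec_eq [DecidableEq n] [CommRing R] {S : Matrix n n R}
    (hS : IsUnit S.det) (c : R) (s : Finset ι) (x : ι → n → R)
    (hSx : S = c • (1 : Matrix n n R) + ∑ i ∈ s, vecMulVec (x i) (x i)) :
    ∑ i ∈ s, x i ⬝ᵥ (S⁻¹ *ᵥ x i) = Fintype.card n - c * S⁻¹.trace := by
  rw [sum_dotProduct_mulVec_eq_trace_mul_sum, eq_sub_of_add_eq' hSx.symm, Matrix.mul_sub,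
    nonsing_inv_mul S hS, Matrix.mul_smul, Matrix.mul_one, trace_sub, trace_one, trace_smul,
    smul_eq_mul]

end Matrix

theorem sum_quadratic_inv_le_dim_general {d t : ℕ} (lam : ℝ) (hlam : 0 < lam)
    (x : ℕ → Fin d → ℝ) (St : Matrix (Fin d) (Fin d) ℝ)
    (hS : St = lam • (1 : Matrix (Fin d) (Fin d) ℝ) +
      ∑ i ∈ Finset.range t, vecMulVec (x i) (x i))
    (hpos : St.PosDef) :
    ∑ i ∈ Finset.range t, x i ⬝ᵥ (St⁻¹ *ᵥ x i) ≤ (d : ℝ) := by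
  rw [sum_dotProduct_inv_mulVec_eq hpos.det_pos.ne'.isUnit lam _ x hS, Fintype.card_fin]
  exact sub_le_self _ (mul_nonneg hlam.le hpos.inv.posSemidef.trace_nonneg)

theorem sum_quadratic_inv_le_dim {d t : ℕ} (hd : 1 ≤ d) (lam : ℝ) (hlam : 0 < lam)
    (x : ℕ → Fin d → ℝ) (St : Matrix (Fin d) (Fin d) ℝ)
    (hS : St = lam • (1 : Matrix (Fin d) (Fin d) ℝ) +
      ∑ i ∈ Finset.range t, vecMulVec (x i) (x i))
    (hpos : St.PosDef) :
    ∑ i ∈ Finset.range t, x i ⬝ᵥ (St⁻¹ *ᵥ x i) ≤ (d : ℝ) :=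
  sum_quadratic_inv_le_dim_general lam hlam x St hS hpos
end

section
/- (Potential function bound) Let x₀,…,x_{T-1} ∈ ℝ^d with ‖x_t‖₂ ≤ C_b for all t, and λ > 0. Then log det(I + (1/λ) Σ_{t=0}^{T-1} x_t x_tᵀ) ≤ d · log(1 + T C_b² / (d λ)). -/
/-!
The eigenvalues `μᵢ` of `A = 1 + λ⁻¹ ∑ xₜ xₜᵀ` are positive, so by concavity of `log`,
`log det A = ∑ log μᵢ ≤ d log ((∑ μᵢ) / d) = d log (tr A / d)`, and
`tr A = d + λ⁻¹ ∑ ‖xₜ‖² ≤ d + T C_b² / λ`.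
-/

open Matrix Finset

namespace Real

theorem sum_log_le_card_mul_log_average {ι : Type*} (s : Finset ι) {f : ι → ℝ}
    (hf : ∀ i ∈ s, 0 < f i) : ∑ i ∈ s, log (f i) ≤ #s * log ((∑ i ∈ s, f i) / #s) := by
  rcases s.eq_empty_or_nonempty with rfl | hs
  · simp
  have hcard : (0 : ℝ) < #s := by exact_mod_cast hs.card_pos
  have jensen := strictConcaveOn_log_Ioi.concaveOn.le_map_sum (t := s) (w := fun _ => (#s : ℝ)⁻¹)
    (p := f) (fun _ _ => by positivity) (by simp [hcard.ne']) hf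
  simp only [smul_eq_mul, ← mul_sum] at jensen
  rw [div_eq_inv_mul]
  calc ∑ i ∈ s, log (f i) = #s * ((#s : ℝ)⁻¹ * ∑ i ∈ s, log (f i)) := by field_simp
    _ ≤ _ := by gcongr

end Real

open Real

theorem Matrix.PosDef.log_det_le_card_mul_log_trace_div {n : Type*} [Fintype n] [DecidableEq n]
    {A : Matrix n n ℝ} (hA : A.PosDef) :
    log A.det ≤ Fintype.card n * log (A.trace / Fintype.card n) := by
  rw [hA.isHermitian.det_eq_prod_eigenvalues, hA.isHermitian.trace_eq_sum_eigenvalues]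
  simp only [RCLike.ofReal_real_eq_id, id]
  rw [log_prod fun i _ => (hA.eigenvalues_pos i).ne']
  exact sum_log_le_card_mul_log_average univ fun i _ => hA.eigenvalues_pos i

theorem Matrix.posDef_one_add_smul_sum_vecMulVec_self {n ι : Type*} [Fintype n] [DecidableEq n]
    {c : ℝ} (hc : 0 ≤ c) (s : Finset ι) (x : ι → n → ℝ) :
    (1 + c • ∑ t ∈ s, vecMulVec (x t) (x t)).PosDef :=
  PosDef.one.add_posSemidef <| (posSemidef_sum s fun t _ => by
    simpa using posSemidef_vecMulVec_self_star (x t)).smul hc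

theorem Matrix.trace_one_add_smul_sum_vecMulVec_self {n ι : Type*} [Fintype n] [DecidableEq n]
    (c : ℝ) (s : Finset ι) (x : ι → n → ℝ) :
    (1 + c • ∑ t ∈ s, vecMulVec (x t) (x t)).trace = Fintype.card n + c * ∑ t ∈ s, x t ⬝ᵥ x t := by
  simp [trace_add, trace_smul, trace_sum, trace_vecMulVec]

theorem EuclideanSpace.norm_toLp_sq {n : Type*} [Fintype n] (v : n → ℝ) :
    ‖WithLp.toLp 2 v‖ ^ 2 = v ⬝ᵥ v := by
  rw [← real_inner_self_eq_norm_sq, EuclideanSpace.inner_toLp_toLp, star_trivial]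

theorem potential_function_bound_general {d T : ℕ} (hd : 0 < d) (lam C_b : ℝ)
    (hlam : 0 < lam) (x : ℕ → Fin d → ℝ)
    (hx : ∀ t, t < T → ‖(WithLp.equiv 2 (Fin d → ℝ)).symm (x t)‖ ≤ C_b) :
    Real.log ((1 + (1 / lam) • ∑ t ∈ Finset.range T,
        vecMulVec (x t) (x t) : Matrix (Fin d) (Fin d) ℝ).det) ≤
      (d : ℝ) * Real.log (1 + T * C_b ^ 2 / (d * lam)) := by
  have hA := posDef_one_add_smul_sum_vecMulVec_self (one_div_nonneg.2 hlam.le) (range T) x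
  have hd' : (0 : ℝ) < d := by exact_mod_cast hd
  have : Nonempty (Fin d) := Fin.pos_iff_nonempty.1 hd
  have hnorm_sq : ∑ t ∈ range T, x t ⬝ᵥ x t ≤ T * C_b ^ 2 := by
    refine (sum_le_card_nsmul _ _ _ fun t ht => ?_).trans_eq (by rw [card_range, nsmul_eq_mul])
    rw [← EuclideanSpace.norm_toLp_sq]
    exact pow_le_pow_left₀ (norm_nonneg _) (hx t (mem_range.1 ht)) 2
  have htrace := trace_one_add_smul_sum_vecMulVec_self (1 / lam) (range T) x
  rw [Fintype.card_fin] at htrace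
  refine hA.log_det_le_card_mul_log_trace_div.trans ?_
  rw [Fintype.card_fin]
  gcongr
  · exact div_pos hA.trace_pos hd'
  · rw [htrace, div_le_iff₀ hd']
    field_simp
    gcongr

theorem potential_function_bound {d T : ℕ} (hd : 0 < d) (lam C_b : ℝ)
    (hlam : 0 < lam) (hCb : 0 < C_b) (x : ℕ → Fin d → ℝ)
    (hx : ∀ t, t < T → ‖(WithLp.equiv 2 (Fin d → ℝ)).symm (x t)‖ ≤ C_b) :
    Real.log ((1 + (1 / lam) • ∑ t ∈ Finset.range T,
        vecMulVec (x t) (x t) : Matrix (Fin d) (Fin d) ℝ).det) ≤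
      (d : ℝ) * Real.log (1 + T * C_b ^ 2 / (d * lam)) :=
  potential_function_bound_general hd lam C_b hlam x hx
end

section
/- Let G = Σ_{s=1}^{u} x_s x_sᵀ be invertible, b ∈ ℝ^d with bᵀG^{-1}b ≤ 2d/m, and |ξ_s| ≤ ξ_max for all s, where u ≤ 2m. Then |bᵀ G^{-1} Σ_{s=1}^u x_s ξ_s| ≤ 2√d · ξ_max. -/
/-!
Put `c := G⁻¹ b`. Since `G` is symmetric, the quantity to bound is `∑ ξ_s (c ⬝ x_s)`, while
`bᵀ G⁻¹ b = cᵀ G c = ∑ (c ⬝ x_s)²`. Cauchy–Schwarz then gives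
`|∑ ξ_s (c ⬝ x_s)| ≤ ξ_max √(u ∑ (c ⬝ x_s)²) ≤ ξ_max √(2m · 2d/m) = 2√d ξ_max`.
-/

open Matrix Finset

namespace Matrix

variable {ι n R : Type*} [CommSemiring R]

theorem isSymm_sum_vecMulVec_self (s : Finset ι) (x : ι → n → R) :
    (∑ i ∈ s, vecMulVec (x i) (x i)).IsSymm := by
  simp only [IsSymm, transpose_sum, transpose_vecMulVec]

theorem dotProduct_sum_vecMulVec_self_mulVec [Fintype n] (s : Finset ι) (x : ι → n → R)
    (v : n → R) :
    v ⬝ᵥ ((∑ i ∈ s, vecMulVec (x i) (x i)) *ᵥ v) = ∑ i ∈ s, (v ⬝ᵥ x i) ^ 2 := by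
  simp only [sum_mulVec, dotProduct_sum, vecMulVec_mulVec, op_smul_eq_smul, dotProduct_smul,
    smul_eq_mul, dotProduct_comm (x _) v, sq]

theorem IsSymm.dotProduct_mulVec_comm [Fintype n] {A : Matrix n n R} (hA : A.IsSymm)
    (v w : n → R) : v ⬝ᵥ (A *ᵥ w) = (A *ᵥ v) ⬝ᵥ w := by
  rw [dotProduct_mulVec, ← mulVec_transpose, hA.eq]

end Matrix

theorem abs_sum_mul_le_mul_sqrt_card_mul_sum_sq {ι : Type*} (s : Finset ι) (w a : ι → ℝ)
    {W : ℝ} (hW : 0 ≤ W) (hw : ∀ i ∈ s, |w i| ≤ W) :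
    |∑ i ∈ s, w i * a i| ≤ W * √(#s * ∑ i ∈ s, a i ^ 2) := by
  have hcs : ∑ i ∈ s, |a i| ≤ √(#s * ∑ i ∈ s, a i ^ 2) := by
    apply Real.le_sqrt_of_sq_le
    simpa only [sq_abs] using sq_sum_le_card_mul_sum_sq (s := s) (f := fun i => |a i|) (α := ℝ)
  calc |∑ i ∈ s, w i * a i|
      ≤ ∑ i ∈ s, |w i| * |a i| := by
        simpa only [abs_mul] using abs_sum_le_sum_abs (fun i => w i * a i) s
    _ ≤ ∑ i ∈ s, W * |a i| := by gcongr with i hi; exact hw i hi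
    _ = W * ∑ i ∈ s, |a i| := (mul_sum _ _ _).symm
    _ ≤ W * √(#s * ∑ i ∈ s, a i ^ 2) := by gcongr

theorem misspecification_term_bound {d u m : ℕ} (hm : 0 < m) (hu : u ≤ 2 * m)
    (x : ℕ → Fin d → ℝ) (ξ : ℕ → ℝ) (ξmax : ℝ)
    (G : Matrix (Fin d) (Fin d) ℝ)
    (hG : G = ∑ s ∈ Finset.range u, vecMulVec (x s) (x s))
    (hGinv : IsUnit G.det)
    (b : Fin d → ℝ) (hb : b ⬝ᵥ (G⁻¹ *ᵥ b) ≤ 2 * d / m)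
    (hξ : ∀ s, |ξ s| ≤ ξmax) :
    |b ⬝ᵥ (G⁻¹ *ᵥ (∑ s ∈ Finset.range u, ξ s • x s))| ≤
      2 * Real.sqrt d * ξmax := by
  set c := G⁻¹ *ᵥ b
  have hsymm : G.IsSymm := hG ▸ isSymm_sum_vecMulVec_self _ x
  have hlhs :
      b ⬝ᵥ (G⁻¹ *ᵥ ∑ s ∈ range u, ξ s • x s) = ∑ s ∈ range u, ξ s * (c ⬝ᵥ x s) := by
    simp only [hsymm.inv.dotProduct_mulVec_comm, dotProduct_sum, dotProduct_smul, smul_eq_mul, c]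
  have hsq : ∑ s ∈ range u, (c ⬝ᵥ x s) ^ 2 ≤ 2 * d / m := by
    have hquad : b ⬝ᵥ c = c ⬝ᵥ (G *ᵥ c) := by
      rw [mulVec_mulVec, mul_nonsing_inv G hGinv, one_mulVec, dotProduct_comm]
    rwa [hquad, hG, dotProduct_sum_vecMulVec_self_mulVec] at hb
  have hcard : (#(range u) : ℝ) * ∑ s ∈ range u, (c ⬝ᵥ x s) ^ 2 ≤ (2 * √d) ^ 2 := by
    calc (#(range u) : ℝ) * ∑ s ∈ range u, (c ⬝ᵥ x s) ^ 2
        ≤ (2 * m) * (2 * d / m) := by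
          rw [card_range]
          gcongr
          exact_mod_cast hu
      _ = (2 * √d) ^ 2 := by
          rw [mul_pow, Real.sq_sqrt d.cast_nonneg]
          field_simp
  have hξmax : 0 ≤ ξmax := (abs_nonneg _).trans (hξ 0)
  rw [hlhs, mul_comm _ ξmax]
  calc |∑ s ∈ range u, ξ s * (c ⬝ᵥ x s)|
      ≤ ξmax * √(#(range u) * ∑ s ∈ range u, (c ⬝ᵥ x s) ^ 2) :=
        abs_sum_mul_le_mul_sqrt_card_mul_sum_sq _ _ _ hξmax fun s _ => hξ s
    _ ≤ ξmax * (2 * √d) := by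
        gcongr
        exact (Real.sqrt_le_left (by positivity)).2 hcard
end

section
/- (Weak GAM preserves maximizers) Let f, f₀ : X → ℝ attain maxima f_w* and f* respectively, and suppose |f(x) - f_w* + f* - f₀(x)| ≤ ρ(f* - f₀(x)) for all x ∈ X with 0 ≤ ρ < 1. Then argmax f = argmax f₀. -/
/-!
Write `g x = f* - f₀ x ≥ 0` and `d x = f_w* - f x` for the two suboptimality gaps. The
misspecification condition says `|g - d| ≤ ρ g`, which squeezes `d` between `(1 - ρ) g` and
`(1 + ρ) g`. Since `1 - ρ > 0`, the gaps vanish together, so `f ≤ f_w*` with equality exactly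
where `f₀ = f*`; in particular both functions have the same maximizers.
-/

theorem mul_le_and_le_mul_of_abs_sub_le_mul {g d ρ : ℝ} (h : |g - d| ≤ ρ * g) :
    (1 - ρ) * g ≤ d ∧ d ≤ (1 + ρ) * g := by
  obtain ⟨h₁, h₂⟩ := abs_le.mp h
  constructor <;> linarith

theorem nonneg_of_abs_sub_le_mul {g d ρ : ℝ} (hg : 0 ≤ g) (hρ : ρ < 1)
    (h : |g - d| ≤ ρ * g) : 0 ≤ d :=
  (mul_nonneg (sub_nonneg.mpr hρ.le) hg).trans (mul_le_and_le_mul_of_abs_sub_le_mul h).1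

theorem eq_zero_iff_of_abs_sub_le_mul {g d ρ : ℝ} (hg : 0 ≤ g) (hρ : ρ < 1)
    (h : |g - d| ≤ ρ * g) : d = 0 ↔ g = 0 := by
  obtain ⟨hlow, hhigh⟩ := mul_le_and_le_mul_of_abs_sub_le_mul h
  constructor
  · rintro rfl
    exact le_antisymm (nonpos_of_mul_nonpos_right hlow (by linarith)) hg
  · rintro rfl
    linarith

theorem setOf_forall_le_eq_setOf_eq {X β : Type*} [PartialOrder β] {f : X → β} {M : β}
    (hattain : ∃ x, f x = M) (hle : ∀ y, f y ≤ M) :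
    {x | ∀ y, f y ≤ f x} = {x | f x = M} := by
  obtain ⟨x₀, rfl⟩ := hattain
  ext x
  exact ⟨fun hx => le_antisymm (hle x) (hx x₀), fun hx y => hx ▸ hle y⟩

theorem weak_gam_preserves_maximizers_general {X : Type*} (f f₀ : X → ℝ)
    (fwstar fstar : ℝ)
    (hf : ∃ x, f₀ x = fstar ∧ ∀ y, f₀ y ≤ fstar)
    (ρ : ℝ) (hρ1 : ρ < 1)
    (hgam : ∀ x, |f x - fwstar + fstar - f₀ x| ≤ ρ * (fstar - f₀ x)) :
    {x | ∀ y, f y ≤ f x} = {x | ∀ y, f₀ y ≤ f₀ x} := by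
  obtain ⟨x₀, hx₀, hle₀⟩ := hf
  have hgap : ∀ x, |(fstar - f₀ x) - (fwstar - f x)| ≤ ρ * (fstar - f₀ x) := fun x => by
    convert hgam x using 2
    ring
  have hg : ∀ x, 0 ≤ fstar - f₀ x := fun x => sub_nonneg.mpr (hle₀ x)
  have hlevel : ∀ x, f x = fwstar ↔ f₀ x = fstar := fun x => by
    simpa only [sub_eq_zero, eq_comm] using eq_zero_iff_of_abs_sub_le_mul (hg x) hρ1 (hgap x)
  have hle : ∀ x, f x ≤ fwstar := fun x =>
    sub_nonneg.mp (nonneg_of_abs_sub_le_mul (hg x) hρ1 (hgap x))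
  rw [setOf_forall_le_eq_setOf_eq ⟨x₀, (hlevel x₀).mpr hx₀⟩ hle,
    setOf_forall_le_eq_setOf_eq ⟨x₀, hx₀⟩ hle₀]
  exact Set.ext hlevel

theorem weak_gam_preserves_maximizers {X : Type*} (f f₀ : X → ℝ)
    (fwstar fstar : ℝ)
    (hfw : ∃ x, f x = fwstar ∧ ∀ y, f y ≤ fwstar)
    (hf : ∃ x, f₀ x = fstar ∧ ∀ y, f₀ y ≤ fstar)
    (ρ : ℝ) (hρ0 : 0 ≤ ρ) (hρ1 : ρ < 1)
    (hgam : ∀ x, |f x - fwstar + fstar - f₀ x| ≤ ρ * (fstar - f₀ x)) :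
    {x | ∀ y, f y ≤ f x} = {x | ∀ y, f₀ y ≤ f₀ x} :=
  weak_gam_preserves_maximizers_general f f₀ fwstar fstar hf ρ hρ1 hgam
end

section
/- Suppose w* ∈ Ball_t := {w : ‖w - ŵ_t‖²_{Σ_t} ≤ β_t} and x_t maximizes max_{w ∈ Ball_t} wᵀx over x ∈ X while x* ∈ X. Then w*ᵀ(x* - x_t) ≤ 2√(β_t) · ‖x_t‖_{Σ_t^{-1}}. -/
/-!
Optimism reduces the gap to a difference of parameters: since `ws ∈ Ball` and `xs ∈ X`, the
optimistic value `wt ⬝ᵥ xt` dominates `ws ⬝ᵥ xs`, so the gap is at most `(wt - ws) ⬝ᵥ xt`.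
Both `wt` and `ws` lie in the `St`-ellipsoid of radius `√β` around `wh`, so `‖wt - ws‖_St ≤ 2√β`,
and the dual Cauchy–Schwarz inequality `v ⬝ᵥ x ≤ ‖v‖_St ‖x‖_St⁻¹` finishes the proof.
Cauchy–Schwarz and the triangle inequality for `‖·‖_S` come from the inner product
`Matrix.toInnerProductSpace` that a positive semidefinite `S` induces on `n → ℝ`.
-/

open Matrix

namespace Matrix

variable {n : Type*} [Fintype n]

noncomputable def formNorm (S : Matrix n n ℝ) (v : n → ℝ) : ℝ := √(v ⬝ᵥ (S *ᵥ v))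

section PosSemidef

variable {S : Matrix n n ℝ} (hS : S.PosSemidef)
include hS

theorem PosSemidef.formNorm_eq_norm (v : n → ℝ) :
    S.formNorm v = @norm _ (S.toSeminormedAddCommGroup hS).toNorm v := by
  let := S.toSeminormedAddCommGroup hS
  let := S.toInnerProductSpace hS
  rw [@norm_eq_sqrt_re_inner ℝ, RCLike.re_to_real]
  exact congrArg Real.sqrt (dotProduct_comm _ _)

theorem PosSemidef.inner_eq (u v : n → ℝ) :
    u ⬝ᵥ (S *ᵥ v) = @inner ℝ _ (S.toInnerProductSpace hS).toInner u v := by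
  let := S.toSeminormedAddCommGroup hS
  exact dotProduct_comm _ _

theorem PosSemidef.dotProduct_mulVec_le_formNorm_mul (u v : n → ℝ) :
    u ⬝ᵥ (S *ᵥ v) ≤ S.formNorm u * S.formNorm v := by
  let := S.toSeminormedAddCommGroup hS
  let := S.toInnerProductSpace hS
  rw [hS.inner_eq, hS.formNorm_eq_norm, hS.formNorm_eq_norm]
  exact real_inner_le_norm u v

theorem PosSemidef.formNorm_sub_le (u v : n → ℝ) :
    S.formNorm (u - v) ≤ S.formNorm u + S.formNorm v := by
  let := S.toSeminormedAddCommGroup hS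
  simp only [hS.formNorm_eq_norm]
  exact @norm_sub_le _ (S.toSeminormedAddCommGroup hS).toSeminormedAddGroup u v

end PosSemidef

theorem PosDef.dotProduct_le_formNorm_mul_formNorm_inv [DecidableEq n] {S : Matrix n n ℝ}
    (hS : S.PosDef) (v x : n → ℝ) :
    v ⬝ᵥ x ≤ S.formNorm v * S⁻¹.formNorm x := by
  have hdet : IsUnit S.det := (isUnit_iff_isUnit_det S).mp hS.isUnit
  calc v ⬝ᵥ x = v ⬝ᵥ (S *ᵥ (S⁻¹ *ᵥ x)) := by
        rw [mulVec_mulVec, mul_nonsing_inv S hdet, one_mulVec]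
    _ ≤ S.formNorm v * S.formNorm (S⁻¹ *ᵥ x) :=
        hS.posSemidef.dotProduct_mulVec_le_formNorm_mul _ _
    _ = S.formNorm v * S⁻¹.formNorm x := by
      unfold formNorm
      rw [mulVec_mulVec, mul_nonsing_inv S hdet, one_mulVec,
        dotProduct_comm (S⁻¹ *ᵥ x)]

end Matrix

theorem ucb_gap_bound_general {d : ℕ} (St : Matrix (Fin d) (Fin d) ℝ) (hS : St.PosDef)
    (β : ℝ) (wh ws : Fin d → ℝ)
    (X : Set (Fin d → ℝ)) (xt xs : Fin d → ℝ) (hxs : xs ∈ X)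
    (Ball : Set (Fin d → ℝ))
    (hBall : Ball = {w | (w - wh) ⬝ᵥ (St *ᵥ (w - wh)) ≤ β})
    (hws : ws ∈ Ball)
    (wt : Fin d → ℝ) (hwt : wt ∈ Ball)
    (hopt : ∀ x ∈ X, ∀ w ∈ Ball, w ⬝ᵥ x ≤ wt ⬝ᵥ xt) :
    ws ⬝ᵥ xs - ws ⬝ᵥ xt ≤
      2 * Real.sqrt β * Real.sqrt (xt ⬝ᵥ (St⁻¹ *ᵥ xt)) := by
  have hoptimism : ws ⬝ᵥ xs ≤ wt ⬝ᵥ xt := hopt xs hxs ws hws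
  subst hBall
  have hdiam : St.formNorm (wt - ws) ≤ 2 * √β :=
    calc St.formNorm (wt - ws) = St.formNorm ((wt - wh) - (ws - wh)) := by
          rw [sub_sub_sub_cancel_right]
      _ ≤ St.formNorm (wt - wh) + St.formNorm (ws - wh) :=
          hS.posSemidef.formNorm_sub_le _ _
      _ ≤ √β + √β := add_le_add (Real.sqrt_le_sqrt hwt) (Real.sqrt_le_sqrt hws)
      _ = 2 * √β := by ring
  calc ws ⬝ᵥ xs - ws ⬝ᵥ xt ≤ (wt - ws) ⬝ᵥ xt := by rw [sub_dotProduct]; linarith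
    _ ≤ St.formNorm (wt - ws) * St⁻¹.formNorm xt :=
        hS.dotProduct_le_formNorm_mul_formNorm_inv _ _
    _ ≤ 2 * √β * St⁻¹.formNorm xt := by gcongr; exact Real.sqrt_nonneg _

theorem ucb_gap_bound {d : ℕ} (St : Matrix (Fin d) (Fin d) ℝ) (hS : St.PosDef)
    (β : ℝ) (hβ : 0 ≤ β) (wh ws : Fin d → ℝ)
    (X : Set (Fin d → ℝ)) (xt xs : Fin d → ℝ) (hxt : xt ∈ X) (hxs : xs ∈ X)
    (Ball : Set (Fin d → ℝ))
    (hBall : Ball = {w | (w - wh) ⬝ᵥ (St *ᵥ (w - wh)) ≤ β})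
    (hws : ws ∈ Ball)
    (wt : Fin d → ℝ) (hwt : wt ∈ Ball)
    (hopt : ∀ x ∈ X, ∀ w ∈ Ball, w ⬝ᵥ x ≤ wt ⬝ᵥ xt) :
    ws ⬝ᵥ xs - ws ⬝ᵥ xt ≤
      2 * Real.sqrt β * Real.sqrt (xt ⬝ᵥ (St⁻¹ *ᵥ xt)) :=
  ucb_gap_bound_general St hS β wh ws X xt xs hxs Ball hBall hws wt hwt hopt
end

section
/- Let Δ₀,…,Δ_{t-1} ∈ ℝ, x₀,…,x_{t-1} ∈ ℝ^d, λ > 0, and Σ_t = λI + Σ_i x_i x_iᵀ. Then ‖Σ_{i=0}^{t-1} Δ_i x_i‖²_{Σ_t^{-1}} ≤ (Σ_{i=0}^{t-1} Δ_i²) · (Σ_{i=0}^{t-1} ‖x_i‖²_{Σ_t^{-1}}) ≤ d · Σ_{i=0}^{t-1} Δ_i². -/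
/-!
Under the seminorm `‖v‖_A = √(vᵀ A v)` of the positive semidefinite matrix `A = Σ_t⁻¹`, the first
inequality is Cauchy–Schwarz: `‖Σ Δ_i x_i‖_A ≤ Σ |Δ_i| ‖x_i‖_A ≤ √(Σ Δ_i²) √(Σ ‖x_i‖_A²)`.
For the second, `Σ x_iᵀ Σ_t⁻¹ x_i = tr (Σ_t⁻¹ (Σ_t - λI)) = d - λ tr Σ_t⁻¹ ≤ d`.
-/

open Matrix Finset

theorem norm_sum_smul_sq_le {ι E : Type*} [SeminormedAddCommGroup E] [NormedSpace ℝ E]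
    (s : Finset ι) (c : ι → ℝ) (v : ι → E) :
    ‖∑ i ∈ s, c i • v i‖ ^ 2 ≤ (∑ i ∈ s, c i ^ 2) * ∑ i ∈ s, ‖v i‖ ^ 2 := by
  have htri : ‖∑ i ∈ s, c i • v i‖ ≤ ∑ i ∈ s, |c i| * ‖v i‖ :=
    (norm_sum_le _ _).trans_eq (sum_congr rfl fun i _ => norm_smul (c i) (v i))
  calc ‖∑ i ∈ s, c i • v i‖ ^ 2 ≤ (∑ i ∈ s, |c i| * ‖v i‖) ^ 2 := by gcongr
    _ ≤ (∑ i ∈ s, |c i| ^ 2) * ∑ i ∈ s, ‖v i‖ ^ 2 := sum_mul_sq_le_sq_mul_sq _ _ _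
    _ = (∑ i ∈ s, c i ^ 2) * ∑ i ∈ s, ‖v i‖ ^ 2 := by simp only [sq_abs]

namespace Matrix

variable {ι n : Type*}

theorem PosSemidef.sum_smul_dotProduct_mulVec_le [Fintype n] {M : Matrix n n ℝ}
    (hM : M.PosSemidef) (s : Finset ι) (c : ι → ℝ) (v : ι → n → ℝ) :
    (∑ i ∈ s, c i • v i) ⬝ᵥ (M *ᵥ ∑ i ∈ s, c i • v i) ≤
      (∑ i ∈ s, c i ^ 2) * ∑ i ∈ s, v i ⬝ᵥ (M *ᵥ v i) := by
  let E := M.toSeminormedAddCommGroup hM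
  let I := M.toInnerProductSpace hM
  have hnorm (w : n → ℝ) : E.norm w ^ 2 = w ⬝ᵥ (M *ᵥ w) :=
    (@norm_sq_eq_re_inner ℝ _ _ E I w).trans (dotProduct_comm _ _)
  simpa only [hnorm] using @norm_sum_smul_sq_le ι _ E I.toNormedSpace s c v

theorem posSemidef_sum_vecMulVec_self [Fintype n] (s : Finset ι) (x : ι → n → ℝ) :
    (∑ i ∈ s, vecMulVec (x i) (x i)).PosSemidef :=
  posSemidef_sum _ fun i _ => by simpa using posSemidef_vecMulVec_self_star (x i)

theorem PosSemidef.smul_one_add [DecidableEq n] {lam : ℝ} (hlam : 0 ≤ lam) {G : Matrix n n ℝ}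
    (hG : G.PosSemidef) : (lam • 1 + G).PosSemidef :=
  (PosSemidef.one.smul hlam).add hG

theorem dotProduct_mulVec_eq_trace_mul_vecMulVec [Fintype n] {α : Type*} [CommSemiring α]
    (A : Matrix n n α) (v : n → α) : v ⬝ᵥ (A *ᵥ v) = trace (A * vecMulVec v v) := by
  rw [mul_vecMulVec, trace_vecMulVec, dotProduct_comm]

theorem trace_inv_smul_one_add_mul_le_card [Fintype n] [DecidableEq n] {lam : ℝ}
    (hlam : 0 ≤ lam) {G : Matrix n n ℝ} (hG : G.PosSemidef) :
    trace ((lam • 1 + G)⁻¹ * G) ≤ Fintype.card n := by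
  set S := lam • (1 : Matrix n n ℝ) + G
  by_cases hS : IsUnit S.det
  · have htr : 0 ≤ trace S⁻¹ := (hG.smul_one_add hlam).inv.trace_nonneg
    have hG_eq : G = S - lam • 1 := by simp [S]
    rw [hG_eq, Matrix.mul_sub, nonsing_inv_mul _ hS, Matrix.mul_smul, Matrix.mul_one, trace_sub,
      trace_one, trace_smul, smul_eq_mul]
    exact sub_le_self _ (mul_nonneg hlam htr)
  · -- a singular `S` has the junk inverse `0`
    simp [nonsing_inv_apply_not_isUnit _ hS]

theorem sum_dotProduct_inv_mulVec_le_card [Fintype n] [DecidableEq n] {lam : ℝ}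
    (hlam : 0 ≤ lam) (s : Finset ι) (x : ι → n → ℝ) :
    ∑ i ∈ s, x i ⬝ᵥ ((lam • 1 + ∑ i ∈ s, vecMulVec (x i) (x i))⁻¹ *ᵥ x i) ≤ Fintype.card n := by
  simpa only [dotProduct_mulVec_eq_trace_mul_vecMulVec, ← trace_sum, ← mul_sum]
    using trace_inv_smul_one_add_mul_le_card hlam (posSemidef_sum_vecMulVec_self s x)

end Matrix

theorem misspecified_sum_bound {d t : ℕ} (lam : ℝ) (hlam : 0 < lam)
    (x : ℕ → Fin d → ℝ) (Δ : ℕ → ℝ)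
    (St : Matrix (Fin d) (Fin d) ℝ)
    (hS : St = lam • (1 : Matrix (Fin d) (Fin d) ℝ) +
      ∑ i ∈ Finset.range t, vecMulVec (x i) (x i)) :
    (∑ i ∈ Finset.range t, Δ i • x i) ⬝ᵥ
        (St⁻¹ *ᵥ (∑ i ∈ Finset.range t, Δ i • x i)) ≤
      (∑ i ∈ Finset.range t, (Δ i) ^ 2) *
        (∑ i ∈ Finset.range t, x i ⬝ᵥ (St⁻¹ *ᵥ x i)) ∧
    (∑ i ∈ Finset.range t, (Δ i) ^ 2) *
        (∑ i ∈ Finset.range t, x i ⬝ᵥ (St⁻¹ *ᵥ x i)) ≤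
      (d : ℝ) * ∑ i ∈ Finset.range t, (Δ i) ^ 2 := by
  have hSt : St⁻¹.PosSemidef :=
    hS ▸ ((posSemidef_sum_vecMulVec_self (range t) x).smul_one_add hlam.le).inv
  have hpotential : ∑ i ∈ range t, x i ⬝ᵥ (St⁻¹ *ᵥ x i) ≤ d := by
    simpa [hS] using sum_dotProduct_inv_mulVec_le_card hlam.le (range t) x
  refine ⟨hSt.sum_smul_dotProduct_mulVec_le _ Δ x, ?_⟩
  rw [mul_comm (d : ℝ)]
  exact mul_le_mul_of_nonneg_left hpotential (sum_nonneg fun i _ => sq_nonneg (Δ i))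
end
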